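/- arXiv:1202.6285 — 2 statements merged into one kernel-verified Lean document; each statement's English description precedes it below -/
import Mathlib

section
/- Let q_s < q_t and let κ₋ = Σ_{w∈W} r^w τ_w with r_s = 1, r_t = −1/q_t, where r^w is the product of r-parameters along a reduced expression for w. Then in L²_q W one has τ_s κ₋ = q_s κ₋ and τ_t κ₋ = −κ₋, and equivalently s·κ₋ = κ₋ and t·κ₋ = −κ₋. -/
/-!
Pair each `w` with `s w` (resp. `t w`). Since `r_s = 1`, the `s`-pair contributes
`r^w (τ_w + τ_{sw})`, and `τ_w + τ_{sw}` is a `q_s`-eigenvector of `τ_s`. Since `r_t = -1/q_t`,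
the `t`-pair with `ℓ(w) < ℓ(tw)` contributes `r^w (τ_w - q_t⁻¹ τ_{tw})`, a `(-1)`-eigenvector of
`τ_t`. Summing the pair sums over all `w` counts every term of `κ₋` twice, so continuity of the
operator gives `2 τ_s κ₋ = 2 q_s κ₋` and `2 τ_t κ₋ = -2 κ₋`; the statements about `s` and `t`
are then scalar identities.
-/

def zmodToInt (n : ZMod 0) : ℤ := n

def dihLen : DihedralGroup 0 → ℕ
  | .r n => 2 * (zmodToInt n).natAbs
  | .sr k => if zmodToInt k ≤ 0 then 2 * (zmodToInt k).natAbs + 1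
             else 2 * (zmodToInt k).natAbs - 1

def dihProd (a b : ℝ) : DihedralGroup 0 → ℝ
  | .r n => (a * b) ^ (zmodToInt n).natAbs
  | .sr k => if zmodToInt k ≤ 0 then a ^ ((zmodToInt k).natAbs + 1) * b ^ (zmodToInt k).natAbs
             else a ^ ((zmodToInt k).natAbs - 1) * b ^ (zmodToInt k).natAbs

section PairedSums

variable {ι 𝕜 E : Type*} [Field 𝕜] [NeZero (2 : 𝕜)] [AddCommGroup E] [Module 𝕜 E]
  [TopologicalSpace E] [ContinuousAdd E] [ContinuousConstSMul 𝕜 E] [T2Space E]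

theorem ContinuousLinearMap.map_tsum_eq_smul_of_pairs (L : E →L[𝕜] E) (σ : ι ≃ ι)
    {f : ι → E} (hf : Summable f) {c : 𝕜}
    (hpair : ∀ i, L (f i + f (σ i)) = c • (f i + f (σ i))) :
    L (∑' i, f i) = c • ∑' i, f i := by
  set S := ∑' i, f i
  have hpairs : HasSum (fun i => f i + f (σ i)) (S + S) :=
    hf.hasSum.add ((σ.hasSum_iff).mpr hf.hasSum)
  have hdouble : L (S + S) = c • (S + S) := by
    refine (hpairs.mapL L).unique ?_
    simpa only [Function.comp_def, hpair] using hpairs.const_smul c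
  have htwo : (2 : 𝕜) • L S = (2 : 𝕜) • c • S := by
    rw [two_smul, two_smul, ← map_add, hdouble, smul_add]
  exact smul_right_injective E two_ne_zero htwo

end PairedSums

section HeckeGenerator

variable {G H F : Type*} [Group G] [AddCommGroup H] [Module ℝ H] [FunLike F H H]
  [LinearMapClass F ℝ H H]

def IsHeckeLeftMul (ℓ : G → ℕ) (τ : G → H) (g : G) (q : ℝ) (L : F) : Prop :=
  ∀ w, L (τ w) = if ℓ (g * w) > ℓ w then τ (g * w) else (q - 1) • τ w + q • τ (g * w)

variable {ℓ : G → ℕ} {τ : G → H} {g : G} {q : ℝ} {L : F}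

theorem IsHeckeLeftMul.apply_add_eq_smul (hL : IsHeckeLeftMul ℓ τ g q L) (hg : g * g = 1)
    {w : G} (hw : ℓ (g * w) ≠ ℓ w) :
    L (τ w + τ (g * w)) = q • (τ w + τ (g * w)) := by
  have hggw : g * (g * w) = w := by rw [← mul_assoc, hg, one_mul]
  rw [map_add, hL w, hL (g * w), hggw]
  rcases hw.lt_or_gt with hlt | hgt
  · rw [if_neg hlt.not_gt, if_pos hlt]
    module
  · rw [if_pos hgt, if_neg hgt.not_gt]
    module

theorem IsHeckeLeftMul.apply_sub_inv_smul_eq_neg (hL : IsHeckeLeftMul ℓ τ g q L)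
    (hg : g * g = 1) (hq : q ≠ 0) {w : G} (hw : ℓ w < ℓ (g * w)) :
    L (τ w - q⁻¹ • τ (g * w)) = -(τ w - q⁻¹ • τ (g * w)) := by
  have hggw : g * (g * w) = w := by rw [← mul_assoc, hg, one_mul]
  rw [map_sub, map_smul, hL w, hL (g * w), hggw, if_pos hw, if_neg hw.not_gt]
  match_scalars
  · field_simp; ring
  · field_simp

theorem IsHeckeLeftMul.apply_pair_eq_smul_of_coeff_eq (hL : IsHeckeLeftMul ℓ τ g q L)
    (hg : g * g = 1) (hℓ : ∀ w, ℓ (g * w) ≠ ℓ w) {c : G → ℝ} (hc : ∀ w, c (g * w) = c w)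
    (w : G) :
    L (c w • τ w + c (g * w) • τ (g * w)) = q • (c w • τ w + c (g * w) • τ (g * w)) := by
  rw [hc, ← smul_add, map_smul, hL.apply_add_eq_smul hg (hℓ w), smul_comm]

theorem IsHeckeLeftMul.apply_pair_eq_neg_of_coeff_eq (hL : IsHeckeLeftMul ℓ τ g q L)
    (hg : g * g = 1) (hq : q ≠ 0) (hℓ : ∀ w, ℓ (g * w) ≠ ℓ w) {c : G → ℝ}
    (hc : ∀ w, ℓ w < ℓ (g * w) → c (g * w) = -q⁻¹ * c w) (w : G) :
    L (c w • τ w + c (g * w) • τ (g * w)) = -(c w • τ w + c (g * w) • τ (g * w)) := by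
  suffices hup : ∀ v, ℓ v < ℓ (g * v) →
      L (c v • τ v + c (g * v) • τ (g * v)) = -(c v • τ v + c (g * v) • τ (g * v)) by
    rcases (hℓ w).lt_or_gt with hlt | hgt
    · have := hup (g * w) (by rwa [← mul_assoc, hg, one_mul])
      rwa [← mul_assoc, hg, one_mul, add_comm] at this
    · exact hup w hgt
  intro v hv
  have hpair : c v • τ v + c (g * v) • τ (g * v) = c v • (τ v - q⁻¹ • τ (g * v)) := by
    rw [hc v hv]
    module
  rw [hpair, map_smul, hL.apply_sub_inv_smul_eq_neg hg hq hv, smul_neg]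

end HeckeGenerator

open DihedralGroup

lemma zmodToInt_add (a c : ZMod 0) : zmodToInt (a + c) = zmodToInt a + zmodToInt c := rfl
lemma zmodToInt_sub (a c : ZMod 0) : zmodToInt (a - c) = zmodToInt a - zmodToInt c := rfl
lemma zmodToInt_zero : zmodToInt 0 = 0 := rfl
lemma zmodToInt_one : zmodToInt 1 = 1 := rfl

lemma dihLen_r (n : ZMod 0) : dihLen (r n) = (2 * zmodToInt n).natAbs := by
  simp only [dihLen]; omega

lemma dihLen_sr (k : ZMod 0) : dihLen (sr k) = (2 * zmodToInt k - 1).natAbs := by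
  simp only [dihLen]; split_ifs <;> omega

lemma dihLen_sr_zero_mul_ne (w : DihedralGroup 0) : dihLen (sr 0 * w) ≠ dihLen w := by
  cases w with
  | r n => rw [sr_mul_r, dihLen_sr, dihLen_r, zmodToInt_add, zmodToInt_zero]; omega
  | sr k => rw [sr_mul_sr, dihLen_sr, dihLen_r, zmodToInt_sub, zmodToInt_zero]; omega

lemma dihLen_sr_one_mul_ne (w : DihedralGroup 0) : dihLen (sr 1 * w) ≠ dihLen w := by
  cases w with
  | r n => rw [sr_mul_r, dihLen_sr, dihLen_r, zmodToInt_add, zmodToInt_one]; omega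
  | sr k => rw [sr_mul_sr, dihLen_sr, dihLen_r, zmodToInt_sub, zmodToInt_one]; omega

lemma dihProd_sr_zero_mul (a b : ℝ) {w : DihedralGroup 0} (hw : dihLen w < dihLen (sr 0 * w)) :
    dihProd a b (sr 0 * w) = a * dihProd a b w := by
  cases w with
  | r n =>
    rw [sr_mul_r, zero_add] at hw ⊢
    rw [dihLen_sr, dihLen_r] at hw
    simp only [dihProd, if_pos (show zmodToInt n ≤ 0 by omega)]
    ring
  | sr k =>
    rw [sr_mul_sr, sub_zero] at hw ⊢
    rw [dihLen_sr, dihLen_r] at hw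
    simp only [dihProd, if_neg (show ¬ zmodToInt k ≤ 0 by omega)]
    obtain ⟨m, hm⟩ : ∃ m, (zmodToInt k).natAbs = m + 1 := ⟨(zmodToInt k).natAbs - 1, by omega⟩
    rw [hm, Nat.add_sub_cancel]
    ring

lemma dihProd_sr_one_mul (a b : ℝ) {w : DihedralGroup 0} (hw : dihLen w < dihLen (sr 1 * w)) :
    dihProd a b (sr 1 * w) = b * dihProd a b w := by
  cases w with
  | r n =>
    rw [sr_mul_r] at hw ⊢
    rw [dihLen_sr, dihLen_r, zmodToInt_add, zmodToInt_one] at hw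
    simp only [dihProd, zmodToInt_add, zmodToInt_one, if_neg (show ¬ 1 + zmodToInt n ≤ 0 by omega),
      show (1 + zmodToInt n).natAbs = (zmodToInt n).natAbs + 1 by omega, Nat.add_sub_cancel]
    ring
  | sr k =>
    rw [sr_mul_sr] at hw ⊢
    rw [dihLen_sr, dihLen_r, zmodToInt_sub, zmodToInt_one] at hw
    simp only [dihProd, zmodToInt_sub, zmodToInt_one, if_pos (show zmodToInt k ≤ 0 by omega),
      show (zmodToInt k - 1).natAbs = (zmodToInt k).natAbs + 1 by omega]
    ring

lemma dihProd_one_sr_zero_mul (b : ℝ) (w : DihedralGroup 0) :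
    dihProd 1 b (sr 0 * w) = dihProd 1 b w := by
  rcases (dihLen_sr_zero_mul_ne w).lt_or_gt with hlt | hgt
  · have := dihProd_sr_zero_mul 1 b (w := sr 0 * w) (by rwa [← mul_assoc, sr_mul_self, one_mul])
    rwa [← mul_assoc, sr_mul_self, one_mul, one_mul, eq_comm] at this
  · rw [dihProd_sr_zero_mul 1 b hgt, one_mul]

theorem kappa_minus_eigen_general (qs qt : ℝ) (hqs : 0 < qs) (hqt : 0 < qt)
    {H : Type*} [NormedAddCommGroup H] [InnerProductSpace ℝ H]
    (τ : DihedralGroup 0 → H)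
    (Ls Lt : H →L[ℝ] H)
    (hLs : ∀ w : DihedralGroup 0,
      Ls (τ w) = if dihLen (DihedralGroup.sr 0 * w) > dihLen w
        then τ (DihedralGroup.sr 0 * w)
        else (qs - 1) • τ w + qs • τ (DihedralGroup.sr 0 * w))
    (hLt : ∀ w : DihedralGroup 0,
      Lt (τ w) = if dihLen (DihedralGroup.sr 1 * w) > dihLen w
        then τ (DihedralGroup.sr 1 * w)
        else (qt - 1) • τ w + qt • τ (DihedralGroup.sr 1 * w))
    (κ : H) (hκ : κ = ∑' w, dihProd 1 (-1 / qt) w • τ w)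
    (hsum : Summable fun w => dihProd 1 (-1 / qt) w • τ w) :
    Ls κ = qs • κ ∧
    Lt κ = -κ ∧
    ((1 - qs) / (1 + qs)) • κ + (2 / (1 + qs)) • Ls κ = κ ∧
    ((1 - qt) / (1 + qt)) • κ + (2 / (1 + qt)) • Lt κ = -κ := by
  have hLsκ : Ls κ = qs • κ := by
    rw [hκ]
    refine Ls.map_tsum_eq_smul_of_pairs (Equiv.mulLeft (sr 0)) hsum fun w => ?_
    exact IsHeckeLeftMul.apply_pair_eq_smul_of_coeff_eq hLs (sr_mul_self 0) dihLen_sr_zero_mul_ne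
      (dihProd_one_sr_zero_mul _) w
  have hLtκ : Lt κ = -κ := by
    rw [hκ, ← neg_one_smul ℝ (∑' w, _)]
    refine Lt.map_tsum_eq_smul_of_pairs (Equiv.mulLeft (sr 1)) hsum fun w => ?_
    rw [neg_one_smul]
    refine IsHeckeLeftMul.apply_pair_eq_neg_of_coeff_eq hLt (sr_mul_self 1) hqt.ne'
      dihLen_sr_one_mul_ne (fun v hv => ?_) w
    rw [dihProd_sr_one_mul _ _ hv]
    ring
  refine ⟨hLsκ, hLtκ, ?_, ?_⟩
  · rw [hLsκ]
    match_scalars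
    field_simp
    ring
  · rw [hLtκ]
    match_scalars
    field_simp
    ring

/-- For q_s < q_t, the vector κ₋ = Σ_w r^w τ_w with (r_s, r_t) = (1, −1/q_t)
satisfies τ_s κ₋ = q_s κ₋ and τ_t κ₋ = −κ₋, equivalently s·κ₋ = κ₋ and
t·κ₋ = −κ₋ where s = (1−q_s)/(1+q_s) + (2/(1+q_s))τ_s (and analogously t). -/
theorem kappa_minus_eigen (qs qt : ℝ) (hqs : 0 < qs) (hqt : 0 < qt)
    (hq : qs < qt)
    {H : Type*} [NormedAddCommGroup H] [InnerProductSpace ℝ H] [CompleteSpace H]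
    (τ : DihedralGroup 0 → H)
    (hinner : ∀ w w' : DihedralGroup 0,
      inner (𝕜 := ℝ) (τ w) (τ w') = if w = w' then dihProd qs qt w else 0)
    (Ls Lt : H →L[ℝ] H)
    (hLs : ∀ w : DihedralGroup 0,
      Ls (τ w) = if dihLen (DihedralGroup.sr 0 * w) > dihLen w
        then τ (DihedralGroup.sr 0 * w)
        else (qs - 1) • τ w + qs • τ (DihedralGroup.sr 0 * w))
    (hLt : ∀ w : DihedralGroup 0,
      Lt (τ w) = if dihLen (DihedralGroup.sr 1 * w) > dihLen w
        then τ (DihedralGroup.sr 1 * w)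
        else (qt - 1) • τ w + qt • τ (DihedralGroup.sr 1 * w))
    (κ : H) (hκ : κ = ∑' w, dihProd 1 (-1 / qt) w • τ w)
    (hsum : Summable fun w => dihProd 1 (-1 / qt) w • τ w) :
    Ls κ = qs • κ ∧
    Lt κ = -κ ∧
    ((1 - qs) / (1 + qs)) • κ + (2 / (1 + qs)) • Ls κ = κ ∧
    ((1 - qt) / (1 + qt)) • κ + (2 / (1 + qt)) • Lt κ = -κ :=
  kappa_minus_eigen_general qs qt hqs hqt τ Ls Lt hLs hLt κ hκ hsum
end

section
/- Let κ = Σ_w r^w τ_w ∈ L²_q W be one of the vectors κ(1,1), κ(−1/q_s, −1/q_t), κ(1, −1/q_t), κ(−1/q_s, 1) (whenever it lies in L²_q W). Then κ·τ_w = q^w r^w · κ for every w ∈ W, and consequently κ² = ‖κ‖²_q · κ, so κ/‖κ‖²_q is idempotent. -/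
def altWord : Bool → ℕ → List Bool
  | _, 0 => []
  | b, n + 1 => b :: altWord (!b) n

def dihWord : DihedralGroup 0 → List Bool
  | .r n => if 0 ≤ zmodToInt n then altWord true (2 * (zmodToInt n).natAbs)
            else altWord false (2 * (zmodToInt n).natAbs)
  | .sr k => if zmodToInt k ≤ 0 then altWord true (2 * (zmodToInt k).natAbs + 1)
             else altWord false (2 * (zmodToInt k).natAbs - 1)

/-- Right multiplication by τ_w: the composition of the right multiplications
by the generators along the reduced expression w = s₁⋯sₙ. -/
def Rop {H : Type*} [NormedAddCommGroup H] [Module ℝ H]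
    (Rs Rt : H →L[ℝ] H) (w : DihedralGroup 0) : H →L[ℝ] H :=
  (dihWord w).foldl (fun acc b => (if b then Rs else Rt).comp acc) 1

/-!
Right multiplication by τ_s only couples the coefficients of τ_u and τ_{us}. Since
r^{us} = r_s r^u whenever us is longer than u, comparing coefficients shows
⟪τ_u, κτ_s⟫ = q_s r_s ⟪τ_u, κ⟫ for every u precisely because q_s r_s is a root of the Hecke
relation (X - q_s)(X + 1), i.e. r_s ∈ {1, -1/q_s}. Both κτ_s and q_s r_s κ lie in the closed
span of the τ_u, so they are equal; likewise for t. Multiplying along a reduced word gives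
κτ_w = q^w r^w κ, and then κ² = Σ_w r^w κτ_w = (Σ_w (r^w)² q^w) κ = ‖κ‖² κ.
-/

open scoped RealInnerProductSpace

section ClosedSpan

open Submodule

variable {𝕜 ι E : Type*} [RCLike 𝕜] [NormedAddCommGroup E] [InnerProductSpace 𝕜 E] {v : ι → E}

lemma eq_of_mem_closure_span_of_forall_inner_eq {x y : E}
    (hx : x ∈ (span 𝕜 (Set.range v)).topologicalClosure)
    (hy : y ∈ (span 𝕜 (Set.range v)).topologicalClosure)
    (h : ∀ i, inner 𝕜 (v i) x = inner 𝕜 (v i) y) : x = y := by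
  have hperp : x - y ∈ (span 𝕜 (Set.range v)).topologicalClosureᗮ := by
    rw [orthogonal_closure, mem_orthogonal]
    intro u hu
    induction hu using span_induction with
    | mem z hz => obtain ⟨i, rfl⟩ := hz; rw [inner_sub_right, h i, sub_self]
    | zero => exact inner_zero_left _
    | add z z' _ _ hz hz' => rw [inner_add_left, hz, hz', add_zero]
    | smul a z _ hz => rw [inner_smul_left, hz, mul_zero]
  have h0 : x - y ∈ (⊥ : Submodule 𝕜 E) :=
    (inf_orthogonal_eq_bot _).le ⟨sub_mem hx hy, hperp⟩
  exact sub_eq_zero.mp ((mem_bot 𝕜).mp h0)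

lemma tsum_mem_closure_span {α : Type*} {f : α → E} (hf : ∀ a, f a ∈ span 𝕜 (Set.range v)) :
    ∑' a, f a ∈ (span 𝕜 (Set.range v)).topologicalClosure :=
  tsum_mem (isClosed_topologicalClosure _) fun a => le_topologicalClosure _ (hf a)

end ClosedSpan

section Orthogonal

variable {ι H : Type*} [DecidableEq ι] [NormedAddCommGroup H] [InnerProductSpace ℝ H]
  {τ : ι → H} {p : ι → ℝ} (hinner : ∀ i j, ⟪τ i, τ j⟫ = if i = j then p i else 0)
  {c : ι → ℝ} (hsum : Summable fun i => c i • τ i)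
include hinner hsum

lemma inner_tsum_smul_of_orthogonal (u : ι) : ⟪τ u, ∑' i, c i • τ i⟫ = c u * p u := by
  have h := (innerSL ℝ (τ u)).map_tsum hsum
  simp only [innerSL_apply_apply] at h
  rw [h, tsum_eq_single u]
  · rw [real_inner_smul_right, hinner, if_pos rfl]
  · intro i hi
    simp [real_inner_smul_right, hinner, Ne.symm hi]

lemma hasSum_norm_sq_tsum_smul_of_orthogonal :
    HasSum (fun i => c i ^ 2 * p i) (‖∑' i, c i • τ i‖ ^ 2) := by
  set κ := ∑' i, c i • τ i
  have h := hsum.hasSum.mapL (innerSL ℝ κ)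
  rw [innerSL_apply_apply, real_inner_self_eq_norm_sq] at h
  have hterm (i : ι) : innerSL ℝ κ (c i • τ i) = c i ^ 2 * p i := by
    rw [innerSL_apply_apply, real_inner_smul_right, real_inner_comm,
      inner_tsum_smul_of_orthogonal hinner hsum]
    ring
  simpa only [hterm] using h

end Orthogonal

section HeckeGenerator

variable {G H : Type*} [Group G] {ℓ : G → ℕ} {s : G}
  (hs : s * s = 1) (hℓ : ∀ w, ℓ (w * s) ≠ ℓ w)

include hs in
lemma mul_mul_self_of_mul_self_eq_one (w : G) : w * s * s = w := by
  rw [mul_assoc, hs, mul_one]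

include hℓ in
lemma mul_ne_self_of_length_ne (w : G) : w * s ≠ w :=
  fun h => hℓ w (congrArg ℓ h)

include hℓ in
lemma length_mul_lt_of_not_lt (w : G) (h : ¬ ℓ w < ℓ (w * s)) : ℓ (w * s) < ℓ w := by
  have := hℓ w
  omega

variable [NormedAddCommGroup H] [InnerProductSpace ℝ H] {τ : G → H} {R : H →L[ℝ] H} {q : ℝ}
  (hR : ∀ w, R (τ w) = if ℓ (w * s) > ℓ w then τ (w * s) else (q - 1) • τ w + q • τ (w * s))

include hR in
lemma hecke_apply_mem_span (w : G) : R (τ w) ∈ Submodule.span ℝ (Set.range τ) := by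
  have hτ (w : G) : τ w ∈ Submodule.span ℝ (Set.range τ) := Submodule.subset_span ⟨w, rfl⟩
  rw [hR w]
  split_ifs
  · exact hτ _
  · exact add_mem (Submodule.smul_mem _ _ (hτ _)) (Submodule.smul_mem _ _ (hτ _))

variable [DecidableEq G] {p : G → ℝ}
  (hinner : ∀ w w', ⟪τ w, τ w'⟫ = if w = w' then p w else 0)

include hℓ hR hinner in
lemma inner_hecke_self (u : G) :
    ⟪τ u, R (τ u)⟫ = if ℓ u < ℓ (u * s) then 0 else (q - 1) * p u := by
  have hne := (mul_ne_self_of_length_ne hℓ u).symm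
  rw [hR u]
  split_ifs
  · rw [hinner, if_neg hne]
  · rw [inner_add_right, real_inner_smul_right, real_inner_smul_right, hinner, hinner,
      if_pos rfl, if_neg hne, mul_zero, add_zero]

include hs hℓ hR hinner in
lemma inner_hecke_mul (u : G) :
    ⟪τ u, R (τ (u * s))⟫ = if ℓ u < ℓ (u * s) then q * p u else p u := by
  have hne := (mul_ne_self_of_length_ne hℓ u).symm
  rw [hR (u * s), mul_mul_self_of_mul_self_eq_one hs u]
  by_cases hasc : ℓ u < ℓ (u * s)
  · rw [if_neg (lt_asymm hasc), if_pos hasc, inner_add_right, real_inner_smul_right,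
      real_inner_smul_right, hinner, hinner, if_neg hne, if_pos rfl, mul_zero, zero_add]
  · rw [if_pos (length_mul_lt_of_not_lt hℓ u hasc), if_neg hasc, hinner, if_pos rfl]

include hs hR hinner in
lemma inner_hecke_eq_zero {u w : G} (h₁ : w ≠ u) (h₂ : w ≠ u * s) : ⟪τ u, R (τ w)⟫ = 0 := by
  have h₃ : u ≠ w * s := fun h => h₂ (by rw [h, mul_mul_self_of_mul_self_eq_one hs])
  rw [hR w]
  split_ifs
  · rw [hinner, if_neg h₃]
  · rw [inner_add_right, real_inner_smul_right, real_inner_smul_right, hinner, hinner,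
      if_neg h₃, if_neg (Ne.symm h₁), mul_zero, mul_zero, add_zero]

include hs hℓ hR hinner in
lemma inner_hecke_apply_tsum {c : G → ℝ} (hsum : Summable fun w => c w • τ w) (u : G) :
    ⟪τ u, R (∑' w, c w • τ w)⟫ =
      c u * ⟪τ u, R (τ u)⟫ + c (u * s) * ⟪τ u, R (τ (u * s))⟫ := by
  have hsumR : Summable fun w => c w • R (τ w) := by
    simpa only [map_smul] using hsum.mapL R
  have h := (innerSL ℝ (τ u)).map_tsum hsumR
  simp only [innerSL_apply_apply, real_inner_smul_right] at h
  rw [R.map_tsum hsum]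
  simp only [map_smul]
  rw [h, tsum_eq_sum (s := {u, u * s}), Finset.sum_pair (mul_ne_self_of_length_ne hℓ u).symm]
  intro w hw
  simp only [Finset.mem_insert, Finset.mem_singleton, not_or] at hw
  rw [inner_hecke_eq_zero hs hR hinner hw.1 hw.2, mul_zero]

include hs hℓ hR hinner in
lemma hecke_apply_tsum_eq_smul {c : G → ℝ} {r : ℝ}
    (hc : ∀ w, ℓ w < ℓ (w * s) → c (w * s) = r * c w) (hr : q * r ^ 2 = (q - 1) * r + 1)
    (hsum : Summable fun w => c w • τ w) :
    R (∑' w, c w • τ w) = (q * r) • ∑' w, c w • τ w := by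
  have hinv := mul_mul_self_of_mul_self_eq_one hs
  have hτ (w : G) : c w • τ w ∈ Submodule.span ℝ (Set.range τ) :=
    Submodule.smul_mem _ _ (Submodule.subset_span ⟨w, rfl⟩)
  refine eq_of_mem_closure_span_of_forall_inner_eq ?_
    (Submodule.smul_mem _ _ (tsum_mem_closure_span hτ)) fun u => ?_
  · rw [R.map_tsum hsum]
    exact tsum_mem_closure_span fun w => R.map_smul (c w) (τ w) ▸
      Submodule.smul_mem _ _ (hecke_apply_mem_span hR w)
  rw [real_inner_smul_right, inner_hecke_apply_tsum hs hℓ hR hinner hsum,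
    inner_hecke_self hℓ hR hinner, inner_hecke_mul hs hℓ hR hinner,
    inner_tsum_smul_of_orthogonal hinner hsum]
  by_cases hasc : ℓ u < ℓ (u * s)
  · rw [if_pos hasc, if_pos hasc, hc u hasc]
    ring
  · have hcu : c u = r * c (u * s) := by
      simpa only [hinv] using hc (u * s) (by rw [hinv]; exact length_mul_lt_of_not_lt hℓ u hasc)
    rw [if_neg hasc, if_neg hasc, hcu]
    linear_combination (-(c (u * s) * p u)) * hr

end HeckeGenerator

lemma dihLen_mul_sr_ne (w : DihedralGroup 0) (j : ZMod 0) : dihLen (w * .sr j) ≠ dihLen w := by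
  cases w <;> simp only [DihedralGroup.r_mul_sr, DihedralGroup.sr_mul_sr, dihLen] <;>
    split_ifs <;> omega

lemma zmodToInt_neg (a : ZMod 0) : zmodToInt (-a) = -zmodToInt a := rfl
lemma zmodToInt_one_sub (a : ZMod 0) : zmodToInt (1 - a) = 1 - zmodToInt a := rfl

lemma dihProd_mul_sr_zero (a b : ℝ) {w : DihedralGroup 0}
    (h : dihLen w < dihLen (w * .sr 0)) : dihProd a b (w * .sr 0) = a * dihProd a b w := by
  cases w with
  | r n =>
    simp only [DihedralGroup.r_mul_sr, dihLen, dihProd, zero_sub, zmodToInt_neg,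
      Int.natAbs_neg] at h ⊢
    split_ifs at h ⊢
    · ring
    · omega
  | sr n =>
    simp only [DihedralGroup.sr_mul_sr, dihLen, dihProd, zero_sub, zmodToInt_neg,
      Int.natAbs_neg] at h ⊢
    split_ifs at h ⊢ with hn
    · omega
    · obtain ⟨m, hm⟩ := Nat.exists_eq_add_one_of_ne_zero (by omega : (zmodToInt n).natAbs ≠ 0)
      rw [hm, Nat.add_sub_cancel]
      ring

lemma dihProd_mul_sr_one (a b : ℝ) {w : DihedralGroup 0}
    (h : dihLen w < dihLen (w * .sr 1)) : dihProd a b (w * .sr 1) = b * dihProd a b w := by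
  cases w with
  | r n =>
    simp only [DihedralGroup.r_mul_sr, dihLen, dihProd] at h ⊢
    split_ifs at h ⊢ <;> rw [zmodToInt_one_sub] at *
    · omega
    · rw [show (1 - zmodToInt n).natAbs = (zmodToInt n).natAbs + 1 by omega, Nat.add_sub_cancel]
      ring
  | sr n =>
    simp only [DihedralGroup.sr_mul_sr, dihLen, dihProd] at h ⊢
    split_ifs at h ⊢ <;> rw [zmodToInt_one_sub] at *
    · rw [show (1 - zmodToInt n).natAbs = (zmodToInt n).natAbs + 1 by omega]
      ring
    · omega

lemma altWord_add_two (c : Bool) (n : ℕ) : altWord c (n + 2) = c :: (!c) :: altWord c n := by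
  simp [altWord]

section WordProduct

variable (a b : ℝ)

lemma prod_map_altWord_two_mul (c : Bool) (m : ℕ) :
    ((altWord c (2 * m)).map fun i => if i then a else b).prod = (a * b) ^ m := by
  induction m with
  | zero => rfl
  | succ m ih =>
    rw [mul_add, mul_one, altWord_add_two, List.map_cons, List.map_cons, List.prod_cons,
      List.prod_cons, ih, pow_succ]
    cases c <;>
      simp only [Bool.not_true, Bool.not_false, Bool.false_eq_true, if_true, if_false] <;> ring

lemma dihProd_eq_prod_map_dihWord (w : DihedralGroup 0) :
    dihProd a b w = ((dihWord w).map fun i => if i then a else b).prod := by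
  cases w with
  | r n =>
    simp only [dihProd, dihWord]
    split_ifs <;> rw [prod_map_altWord_two_mul]
  | sr k =>
    simp only [dihProd, dihWord]
    split_ifs
    · rw [altWord, List.map_cons, List.prod_cons, prod_map_altWord_two_mul]
      simp only [if_true]
      ring
    · obtain ⟨m, hm⟩ := Nat.exists_eq_add_one_of_ne_zero (by omega : (zmodToInt k).natAbs ≠ 0)
      rw [hm, Nat.add_sub_cancel, show 2 * (m + 1) - 1 = 2 * m + 1 by omega, altWord,
        List.map_cons, List.prod_cons, prod_map_altWord_two_mul]
      simp only [Bool.false_eq_true, if_false]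
      ring

end WordProduct

lemma foldl_comp_apply_of_apply_eq_smul {α R E : Type*} [CommSemiring R] [AddCommMonoid E]
    [TopologicalSpace E] [Module R E] (F : α → E →L[R] E) (f : α → R) {x : E}
    (hF : ∀ i, F i x = f i • x) (l : List α) :
    (l.foldl (fun A i => (F i).comp A) (1 : E →L[R] E)) x = (l.map f).prod • x := by
  induction l using List.reverseRecOn with
  | nil => simp
  | append_singleton l i ih =>
    rw [List.foldl_append, List.foldl_cons, List.foldl_nil, ContinuousLinearMap.comp_apply, ih,
      map_smul, hF, smul_smul, List.map_append, List.prod_append, List.map_singleton,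
      List.prod_singleton]

lemma Rop_apply_of_apply_eq_smul {H : Type*} [NormedAddCommGroup H] [Module ℝ H]
    {Rs Rt : H →L[ℝ] H} {a b : ℝ} {x : H} (hs : Rs x = a • x) (ht : Rt x = b • x)
    (w : DihedralGroup 0) : Rop Rs Rt w x = dihProd a b w • x := by
  rw [dihProd_eq_prod_map_dihWord]
  exact foldl_comp_apply_of_apply_eq_smul (fun i : Bool => if i then Rs else Rt)
    (fun i => if i then a else b) (fun i => by cases i <;> simp [hs, ht]) _

lemma dihProd_mul_dihProd (a b c d : ℝ) (w : DihedralGroup 0) :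
    dihProd a b w * dihProd c d w = dihProd (a * c) (b * d) w := by
  cases w with
  | r n => simp only [dihProd]; rw [← mul_pow]; ring
  | sr k => simp only [dihProd]; split_ifs <;> rw [mul_pow, mul_pow] <;> ring

lemma hecke_quadratic_of_eq_one_or_eq_neg_inv {q r : ℝ} (hq : q ≠ 0) (hr : r = 1 ∨ r = -1 / q) :
    q * r ^ 2 = (q - 1) * r + 1 := by
  rcases hr with rfl | rfl
  · ring
  · field_simp
    ring

lemma tsum_div_smul_apply_inv_smul {ι E : Type*} [NormedAddCommGroup E] [NormedSpace ℝ E]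
    {T : ι → E →L[ℝ] E} {c : ι → ℝ} {N : ℝ} {x : E} (h : ∑' i, c i • T i x = N • x) :
    ∑' i, (c i / N) • T i (N⁻¹ • x) = N⁻¹ • x := by
  calc ∑' i, (c i / N) • T i (N⁻¹ • x)
      = (N⁻¹ * N⁻¹) • ∑' i, c i • T i x := by
        rw [← tsum_const_smul'']
        refine tsum_congr fun i => ?_
        rw [map_smul, smul_smul, smul_smul, div_eq_mul_inv]
        ring_nf
    _ = N⁻¹ • x := by
        rw [h, smul_smul]
        rcases eq_or_ne N 0 with hN | hN
        · simp [hN]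
        · field_simp

theorem kappa_idempotent_general (qs qt : ℝ) (hqs : 0 < qs) (hqt : 0 < qt)
    {H : Type*} [NormedAddCommGroup H] [InnerProductSpace ℝ H]
    (τ : DihedralGroup 0 → H)
    (hinner : ∀ w w' : DihedralGroup 0,
      inner (𝕜 := ℝ) (τ w) (τ w') = if w = w' then dihProd qs qt w else 0)
    (Rs Rt : H →L[ℝ] H)
    (hRs : ∀ w : DihedralGroup 0,
      Rs (τ w) = if dihLen (w * DihedralGroup.sr 0) > dihLen w
        then τ (w * DihedralGroup.sr 0)
        else (qs - 1) • τ w + qs • τ (w * DihedralGroup.sr 0))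
    (hRt : ∀ w : DihedralGroup 0,
      Rt (τ w) = if dihLen (w * DihedralGroup.sr 1) > dihLen w
        then τ (w * DihedralGroup.sr 1)
        else (qt - 1) • τ w + qt • τ (w * DihedralGroup.sr 1))
    (rs rt : ℝ)
    (hfour : (rs = 1 ∧ rt = 1) ∨ (rs = -1 / qs ∧ rt = -1 / qt) ∨
             (rs = 1 ∧ rt = -1 / qt) ∨ (rs = -1 / qs ∧ rt = 1))
    (hsum : Summable fun w => dihProd rs rt w • τ w)
    (κ : H) (hκ : κ = ∑' w, dihProd rs rt w • τ w) :
    (∀ w : DihedralGroup 0,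
      Rop Rs Rt w κ = (dihProd qs qt w * dihProd rs rt w) • κ) ∧
    (∑' w, dihProd rs rt w • Rop Rs Rt w κ) = ‖κ‖ ^ 2 • κ ∧
    (∑' w, (dihProd rs rt w / ‖κ‖ ^ 2) • Rop Rs Rt w ((‖κ‖ ^ 2)⁻¹ • κ))
      = (‖κ‖ ^ 2)⁻¹ • κ := by
  obtain ⟨hrs, hrt⟩ : (rs = 1 ∨ rs = -1 / qs) ∧ (rt = 1 ∨ rt = -1 / qt) := by tauto
  have hRsκ : Rs κ = (qs * rs) • κ := by
    rw [hκ]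
    exact hecke_apply_tsum_eq_smul (DihedralGroup.sr_mul_self 0) (dihLen_mul_sr_ne · 0) hRs
      hinner (fun _ => dihProd_mul_sr_zero rs rt)
      (hecke_quadratic_of_eq_one_or_eq_neg_inv hqs.ne' hrs) hsum
  have hRtκ : Rt κ = (qt * rt) • κ := by
    rw [hκ]
    exact hecke_apply_tsum_eq_smul (DihedralGroup.sr_mul_self 1) (dihLen_mul_sr_ne · 1) hRt
      hinner (fun _ => dihProd_mul_sr_one rs rt)
      (hecke_quadratic_of_eq_one_or_eq_neg_inv hqt.ne' hrt) hsum
  have hRop (w : DihedralGroup 0) :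
      Rop Rs Rt w κ = (dihProd qs qt w * dihProd rs rt w) • κ := by
    rw [Rop_apply_of_apply_eq_smul hRsκ hRtκ, dihProd_mul_dihProd]
  have hnorm : HasSum (fun w => dihProd rs rt w ^ 2 * dihProd qs qt w) (‖κ‖ ^ 2) :=
    hκ ▸ hasSum_norm_sq_tsum_smul_of_orthogonal hinner hsum
  have hsq : ∑' w, dihProd rs rt w • Rop Rs Rt w κ = ‖κ‖ ^ 2 • κ := by
    rw [← (hnorm.smul_const κ).tsum_eq]
    refine tsum_congr fun w => ?_
    rw [hRop, smul_smul]
    ring_nf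
  exact ⟨hRop, hsq, tsum_div_smul_apply_inv_smul hsq⟩

/-- For κ = Σ_w r^w τ_w one of the vectors κ(1,1), κ(−1/q_s,−1/q_t),
κ(1,−1/q_t), κ(−1/q_s,1) lying in L²_q W: κ·τ_w = q^w r^w κ for all w, hence
κ² = ‖κ‖²_q κ and κ/‖κ‖²_q is idempotent. -/
theorem kappa_idempotent (qs qt : ℝ) (hqs : 0 < qs) (hqt : 0 < qt)
    {H : Type*} [NormedAddCommGroup H] [InnerProductSpace ℝ H] [CompleteSpace H]
    (τ : DihedralGroup 0 → H)
    (hinner : ∀ w w' : DihedralGroup 0,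
      inner (𝕜 := ℝ) (τ w) (τ w') = if w = w' then dihProd qs qt w else 0)
    (Rs Rt : H →L[ℝ] H)
    (hRs : ∀ w : DihedralGroup 0,
      Rs (τ w) = if dihLen (w * DihedralGroup.sr 0) > dihLen w
        then τ (w * DihedralGroup.sr 0)
        else (qs - 1) • τ w + qs • τ (w * DihedralGroup.sr 0))
    (hRt : ∀ w : DihedralGroup 0,
      Rt (τ w) = if dihLen (w * DihedralGroup.sr 1) > dihLen w
        then τ (w * DihedralGroup.sr 1)
        else (qt - 1) • τ w + qt • τ (w * DihedralGroup.sr 1))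
    (rs rt : ℝ)
    (hfour : (rs = 1 ∧ rt = 1) ∨ (rs = -1 / qs ∧ rt = -1 / qt) ∨
             (rs = 1 ∧ rt = -1 / qt) ∨ (rs = -1 / qs ∧ rt = 1))
    (hsum : Summable fun w => dihProd rs rt w • τ w)
    (κ : H) (hκ : κ = ∑' w, dihProd rs rt w • τ w) :
    (∀ w : DihedralGroup 0,
      Rop Rs Rt w κ = (dihProd qs qt w * dihProd rs rt w) • κ) ∧
    (∑' w, dihProd rs rt w • Rop Rs Rt w κ) = ‖κ‖ ^ 2 • κ ∧
    (∑' w, (dihProd rs rt w / ‖κ‖ ^ 2) • Rop Rs Rt w ((‖κ‖ ^ 2)⁻¹ • κ))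
      = (‖κ‖ ^ 2)⁻¹ • κ :=
  kappa_idempotent_general qs qt hqs hqt τ hinner Rs Rt hRs hRt rs rt hfour hsum κ hκ
end
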